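/- arXiv:1510.06321 — 2 statements merged into one kernel-verified Lean document; each statement's English description precedes it below -/
import Mathlib

section
/- Weak-type bounds for the Paley operator: Let (X, μ) be a σ-finite measure space and φ : X → (0,∞) measurable with M_φ := sup_{s>0} s · μ{x : φ(x) ≥ s} < ∞. Define the measure ν by dν = φ² dμ and the sublinear map T f(x) = |f̂(x)|/φ(x) where f̂ satisfies ‖f̂‖_{L²(μ)} ≤ ‖f‖_{L²} and ‖f̂‖_{L^∞} ≤ ‖f‖_{L¹}. Then T is of weak type (2,2) with constant 1 and of weak type (1,1) with constant ≲ M_φ, with respect to the measure ν on the target. -/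
open MeasureTheory Set
open scoped ENNReal NNReal

/-!
The map `g ↦ |g|/φ` is an isometry from `L²(μ)` to `L²(φ² μ)`, so the weak (2,2) bound is
Chebyshev's inequality. For weak (1,1), `|f̂| ≤ ‖f‖₁` a.e. confines the level set `{|f̂|/φ > y}`
to `{φ < t}` with `t = ‖f‖₁/y`, and the layer-cake formula gives
`∫_{φ<t} φ² dμ = 2 ∫₀ᵗ s μ{s ≤ φ < t} ds ≤ 2 M_φ t`.
-/

section
variable {X E : Type*} [MeasurableSpace X] [NormedAddCommGroup E] {μ : Measure X} {φ : X → ℝ}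

/-- `t = ∞` is allowed, so that `‖f‖₁ = ∞` needs no separate treatment. -/
theorem setLIntegral_sq_lt_le_of_weakL1 (hφm : Measurable φ) (hφ : ∀ x, 0 ≤ φ x) {M : ℝ≥0∞}
    (hM : ∀ s : ℝ, 0 < s → ENNReal.ofReal s * μ {x | s ≤ φ x} ≤ M) (t : ℝ≥0∞) :
    ∫⁻ x in {x | ENNReal.ofReal (φ x) < t}, ENNReal.ofReal (φ x ^ 2) ∂μ ≤ 2 * M * t := by
  set S := {x | ENNReal.ofReal (φ x) < t}
  have hS : MeasurableSet S := measurableSet_lt hφm.ennreal_ofReal measurable_const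
  set g := S.indicator φ
  have hg_nonneg : ∀ x, 0 ≤ g x := fun x => indicator_nonneg (fun x _ => hφ x) x
  have hg_le : ∀ x, g x ≤ φ x := fun x => indicator_le_self' (fun x _ => hφ x) x
  have hS_g :
      ∫⁻ x in S, ENNReal.ofReal (φ x ^ 2) ∂μ = ∫⁻ x, ENNReal.ofReal (g x ^ (2 : ℝ)) ∂μ := by
    rw [← lintegral_indicator hS]
    congr 1 with x
    by_cases hx : x ∈ S <;> simp [g, hx]
  have tail_le : ∀ s ∈ Ioi (0 : ℝ), μ {x | s ≤ g x} * ENNReal.ofReal (s ^ ((2 : ℝ) - 1))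
      ≤ {s : ℝ | ENNReal.ofReal s < t}.indicator (fun _ => M) s := by
    intro s (hs : 0 < s)
    by_cases hst : ENNReal.ofReal s < t
    · have hsub : {x | s ≤ g x} ⊆ {x | s ≤ φ x} := fun x hx => hx.trans (hg_le x)
      rw [indicator_of_mem (show s ∈ {s : ℝ | ENNReal.ofReal s < t} from hst),
        show (2 : ℝ) - 1 = 1 by norm_num, Real.rpow_one, mul_comm]
      exact (mul_le_mul_right (measure_mono hsub) _).trans (hM s hs)
    · have : {x | s ≤ g x} = ∅ := by
        refine eq_empty_of_forall_notMem fun x (hx : s ≤ g x) => ?_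
        by_cases hxS : x ∈ S
        · rw [show g x = φ x from indicator_of_mem hxS φ] at hx
          exact hst ((ENNReal.ofReal_le_ofReal hx).trans_lt hxS)
        · rw [show g x = 0 from indicator_of_notMem hxS φ] at hx
          linarith
      simp [this]
  have measure_lt_le : volume.restrict (Ioi (0 : ℝ)) {s | ENNReal.ofReal s < t} ≤ t := by
    rcases eq_or_ne t ⊤ with rfl | ht
    · exact le_top
    · rw [Measure.restrict_apply' measurableSet_Ioi]
      calc volume ({s : ℝ | ENNReal.ofReal s < t} ∩ Ioi 0) ≤ volume (Ioo 0 t.toReal) := by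
            refine measure_mono fun s ⟨hst, hs⟩ => ⟨hs, ?_⟩
            exact (ENNReal.ofReal_lt_iff_lt_toReal hs.le ht).mp hst
        _ = t := by simp [ht]
  calc ∫⁻ x in S, ENNReal.ofReal (φ x ^ 2) ∂μ
      = 2 * ∫⁻ s in Ioi 0, μ {x | s ≤ g x} * ENNReal.ofReal (s ^ ((2 : ℝ) - 1)) := by
        rw [hS_g, lintegral_rpow_eq_lintegral_meas_le_mul μ (ae_of_all _ hg_nonneg)
          (hφm.indicator hS).aemeasurable two_pos, ENNReal.ofReal_ofNat]
    _ ≤ 2 * ∫⁻ s in Ioi 0, {s : ℝ | ENNReal.ofReal s < t}.indicator (fun _ => M) s := by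
        gcongr 2 * ?_
        exact setLIntegral_mono' measurableSet_Ioi tail_le
    _ ≤ 2 * M * t := by
        rw [lintegral_indicator_const (measurableSet_lt ENNReal.measurable_ofReal measurable_const),
          mul_assoc]
        gcongr

theorem eLpNorm_two_norm_div_withDensity_sq (hφm : Measurable φ)
    (hφ : ∀ x, φ x ≠ 0) (g : X → E) :
    eLpNorm (fun x => ‖g x‖ / φ x) 2 (μ.withDensity fun x => ENNReal.ofReal (φ x ^ 2)) =
      eLpNorm g 2 μ := by
  simp only [eLpNorm_eq_lintegral_rpow_enorm_toReal two_ne_zero ENNReal.ofNat_ne_top]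
  rw [lintegral_withDensity_eq_lintegral_mul_non_measurable _
    (hφm.pow_const 2).ennreal_ofReal (ae_of_all _ fun _ => ENNReal.ofReal_lt_top)]
  congr 2 with x
  simp only [Pi.mul_apply, ENNReal.toReal_ofNat, ENNReal.rpow_two, ← ofReal_norm,
    Real.norm_eq_abs]
  rw [← ENNReal.ofReal_pow (abs_nonneg _), ← ENNReal.ofReal_pow (norm_nonneg _),
    ← ENNReal.ofReal_mul (by positivity), sq_abs]
  congr 1
  field_simp [hφ x]

theorem withDensity_sq_meas_lt_norm_div_le_eLpNorm_sq (hφm : Measurable φ)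
    (hφ : ∀ x, φ x ≠ 0) {g : X → E} (hg : AEStronglyMeasurable g μ) {y : ℝ} (hy : 0 < y) :
    (μ.withDensity fun x => ENNReal.ofReal (φ x ^ 2)) {x | y < ‖g x‖ / φ x} ≤
      (eLpNorm g 2 μ / ENNReal.ofReal y) ^ 2 := by
  set ν := μ.withDensity fun x => ENNReal.ofReal (φ x ^ 2)
  have hT : AEStronglyMeasurable (fun x => ‖g x‖ / φ x) ν :=
    (hg.norm.div₀ hφm.aestronglyMeasurable).mono_ac (withDensity_absolutelyContinuous _ _)
  have hsub : {x | y < ‖g x‖ / φ x} ⊆ {x | ENNReal.ofReal y ≤ ‖‖g x‖ / φ x‖ₑ} :=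
    fun x (hx : y < ‖g x‖ / φ x) =>
      (ENNReal.ofReal_le_ofReal (hx.le.trans (le_abs_self _))).trans_eq
        (Real.enorm_eq_ofReal_abs _).symm
  calc ν {x | y < ‖g x‖ / φ x}
      ≤ (ENNReal.ofReal y)⁻¹ ^ (2 : ℝ) * eLpNorm (fun x => ‖g x‖ / φ x) 2 ν ^ (2 : ℝ) := by
        simpa using (measure_mono hsub).trans (meas_ge_le_mul_pow_eLpNorm_enorm ν two_ne_zero
          ENNReal.ofNat_ne_top hT (ENNReal.ofReal_pos.mpr hy).ne' (by simp))
    _ = (eLpNorm g 2 μ / ENNReal.ofReal y) ^ 2 := by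
        rw [eLpNorm_two_norm_div_withDensity_sq hφm hφ, ENNReal.rpow_two, ENNReal.rpow_two,
          ← mul_pow, mul_comm, div_eq_mul_inv]

theorem withDensity_sq_meas_lt_norm_div_le_of_ae_enorm_le (hφm : Measurable φ)
    (hφ : ∀ x, 0 < φ x) {M : ℝ≥0∞}
    (hM : ∀ s : ℝ, 0 < s → ENNReal.ofReal s * μ {x | s ≤ φ x} ≤ M) {g : X → E} {A : ℝ≥0∞}
    (hA : ∀ᵐ x ∂μ, ‖g x‖ₑ ≤ A) {y : ℝ} (hy : 0 < y) :
    (μ.withDensity fun x => ENNReal.ofReal (φ x ^ 2)) {x | y < ‖g x‖ / φ x} ≤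
      2 * M * A / ENNReal.ofReal y := by
  have hsub : ∀ᵐ x ∂μ, x ∈ {x | y < ‖g x‖ / φ x} →
      x ∈ {x | ENNReal.ofReal (φ x) < A / ENNReal.ofReal y} := by
    filter_upwards [hA] with x hx (hxy : y < ‖g x‖ / φ x)
    rw [lt_div_iff₀ (hφ x)] at hxy
    rw [← ofReal_norm] at hx
    rw [ENNReal.lt_div_iff_mul_lt (by simp [hy]) (by simp), mul_comm, ← ENNReal.ofReal_mul hy.le]
    exact ((ENNReal.ofReal_lt_ofReal_iff ((mul_pos hy (hφ x)).trans hxy)).mpr hxy).trans_le hx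
  calc (μ.withDensity fun x => ENNReal.ofReal (φ x ^ 2)) {x | y < ‖g x‖ / φ x}
      ≤ (μ.withDensity fun x => ENNReal.ofReal (φ x ^ 2))
          {x | ENNReal.ofReal (φ x) < A / ENNReal.ofReal y} :=
        measure_mono_ae (hsub.filter_mono (withDensity_absolutelyContinuous μ _).ae_le)
    _ ≤ 2 * M * (A / ENNReal.ofReal y) := by
        rw [withDensity_apply _ (measurableSet_lt hφm.ennreal_ofReal measurable_const)]
        exact setLIntegral_sq_lt_le_of_weakL1 hφm (fun x => (hφ x).le) hM _
    _ = 2 * M * A / ENNReal.ofReal y := (mul_div_assoc _ _ _).symm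

end

/-- Weak-type bounds for the Paley operator: there is an absolute constant `K` such that
for any σ-finite measure spaces `(X, μ)`, `(Y, μY)`, any measurable `φ : X → (0,∞)` with
`M_φ = sup_{s>0} s μ{φ ≥ s} < ∞`, and any "Fourier transform" `hat` satisfying
`‖hat f‖_{L²(μ)} ≤ ‖f‖_{L²(μY)}` and `‖hat f‖_{L^∞(μ)} ≤ ‖f‖_{L¹(μY)}`, the sublinear
map `T f = |hat f|/φ` is of weak type (2,2) with constant 1 and of weak type (1,1) with
constant `K · M_φ`, with respect to the measure `ν = φ² dμ` on the target. -/
theorem stmt_9 :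
    ∃ K : ℝ≥0∞, 0 < K ∧ K ≠ ⊤ ∧
      ∀ (X Y : Type) (mX : MeasurableSpace X) (mY : MeasurableSpace Y)
        (μ : Measure X) (μY : Measure Y), SigmaFinite μ → SigmaFinite μY →
        ∀ φ : X → ℝ, Measurable φ → (∀ x, 0 < φ x) →
        ∀ Mφ : ℝ≥0∞, Mφ ≠ ⊤ →
          (∀ s : ℝ, 0 < s → ENNReal.ofReal s * μ {x | s ≤ φ x} ≤ Mφ) →
        ∀ hat : (Y → ℂ) → X → ℂ, (∀ f, Measurable (hat f)) →
          (∀ f, eLpNorm (hat f) 2 μ ≤ eLpNorm f 2 μY) →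
          (∀ f, eLpNorm (hat f) ∞ μ ≤ eLpNorm f 1 μY) →
        ∀ (f : Y → ℂ) (y : ℝ), 0 < y →
          (μ.withDensity fun x => ENNReal.ofReal (φ x ^ 2))
              {x | y < ‖hat f x‖ / φ x} ≤
            (eLpNorm f 2 μY / ENNReal.ofReal y) ^ 2 ∧
          (μ.withDensity fun x => ENNReal.ofReal (φ x ^ 2))
              {x | y < ‖hat f x‖ / φ x} ≤
            K * Mφ * eLpNorm f 1 μY / ENNReal.ofReal y := by
  refine ⟨2, two_pos, ENNReal.ofNat_ne_top, ?_⟩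
  intro X Y _ _ μ μY _ _ φ hφm hφ Mφ _ hMφ hat hat_meas hat_L2 hat_L1 f y hy
  have hat_ae_le : ∀ᵐ x ∂μ, ‖hat f x‖ₑ ≤ eLpNorm f 1 μY := by
    filter_upwards [enorm_ae_le_eLpNormEssSup (hat f) μ] with x hx
    exact hx.trans ((eLpNorm_exponent_top (f := hat f)).symm.trans_le (hat_L1 f))
  refine ⟨?_, withDensity_sq_meas_lt_norm_div_le_of_ae_enorm_le hφm hφ hMφ hat_ae_le hy⟩
  calc _ ≤ (eLpNorm (hat f) 2 μ / ENNReal.ofReal y) ^ 2 :=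
        withDensity_sq_meas_lt_norm_div_le_eLpNorm_sq hφm (fun x => (hφ x).ne')
          (hat_meas f).aestronglyMeasurable hy
    _ ≤ (eLpNorm f 2 μY / ENNReal.ofReal y) ^ 2 := by gcongr; exact hat_L2 f
end

section
/- Spectral multiplier norm computation for measurable functions: Let (X, μ) be a σ-finite measure space, L : X → [0,∞) measurable, and φ : [0,∞) → [0,1] continuous, strictly decreasing, with φ(0) = 1 and φ(u) → 0 as u → ∞. Define g = φ ∘ L. Then for every r ∈ [1,∞), sup_{t>0} t^{1/r} g*(t) = sup_{u>0} φ(u) · ( μ{x : L(x) < u} )^{1/r}, where g* is the decreasing rearrangement of g. -/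
/-!
Both sides are the weak-`Lʳ` quasinorm of `g = φ ∘ L`, computed once through `g*` and once
through the distribution function `d_g`; they agree because `s < g*(t)` forces `t < d_g(s)`,
which in turn forces `s ≤ g*(t)`. On the other side, `φ` maps `(0,∞)` onto `(0,1)` by the
intermediate value theorem, `d_g(φ u) = μ{L < u}`, and `d_g(s) = 0` for `s ≥ 1`, so
substituting `s = φ u` turns the distribution side into the right-hand side.
-/

open MeasureTheory Set Filter
open scoped ENNReal Topology

/-- The distribution function of `g`. -/
noncomputable def distFun {α : Type*} [MeasurableSpace α] (μ : Measure α)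
    (g : α → ℝ) (s : ℝ≥0∞) : ℝ≥0∞ :=
  μ {x | s < ENNReal.ofReal |g x|}

/-- The decreasing rearrangement `g*` of `g`. -/
noncomputable def decRearr {α : Type*} [MeasurableSpace α] (μ : Measure α)
    (g : α → ℝ) (t : ℝ≥0∞) : ℝ≥0∞ :=
  sInf {s : ℝ≥0∞ | distFun μ g s ≤ t}

section Rearrangement

variable {α : Type*} [MeasurableSpace α] (μ : Measure α) (g : α → ℝ)

theorem distFun_antitone : Antitone (distFun μ g) :=
  fun _ _ h => measure_mono fun _ hx => h.trans_lt hx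

theorem distFun_eq_zero_of_abs_le {c : ℝ} (hg : ∀ x, |g x| ≤ c) {s : ℝ≥0∞}
    (hs : ENNReal.ofReal c ≤ s) : distFun μ g s = 0 := by
  have hempty : {x | s < ENNReal.ofReal |g x|} = ∅ :=
    eq_empty_of_forall_notMem fun x hx => hx.not_ge ((ENNReal.ofReal_le_ofReal (hg x)).trans hs)
  rw [distFun, hempty, measure_empty]

variable {μ g}

theorem lt_distFun_of_lt_decRearr {s t : ℝ≥0∞} (h : s < decRearr μ g t) : t < distFun μ g s :=
  lt_of_not_ge fun hst => h.not_ge (sInf_le hst)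

theorem le_decRearr_of_lt_distFun {s t : ℝ≥0∞} (h : t < distFun μ g s) : s ≤ decRearr μ g t :=
  le_sInf fun _ hs' => le_of_not_gt fun hlt => h.not_ge ((distFun_antitone μ g hlt.le).trans hs')

theorem iSup_rpow_mul_decRearr_eq {p : ℝ} (hp : 0 < p) :
    (⨆ t ∈ Ioi (0:ℝ), ENNReal.ofReal t ^ p * decRearr μ g (ENNReal.ofReal t)) =
      ⨆ s ∈ Ioi (0:ℝ), ENNReal.ofReal s * distFun μ g (ENNReal.ofReal s) ^ p := by
  apply le_antisymm
  · refine iSup₂_le fun t _ => ENNReal.mul_le_of_forall_lt fun a ha b hb => ?_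
    rcases eq_or_ne b 0 with rfl | hb0
    · simp
    have hbtop : b ≠ ∞ := hb.ne_top
    have hdist : ENNReal.ofReal t < distFun μ g (ENNReal.ofReal b.toReal) := by
      rw [ENNReal.ofReal_toReal hbtop]
      exact lt_distFun_of_lt_decRearr hb
    calc a * b ≤ ENNReal.ofReal t ^ p * b := by gcongr
      _ ≤ distFun μ g (ENNReal.ofReal b.toReal) ^ p * b := by gcongr
      _ = ENNReal.ofReal b.toReal * distFun μ g (ENNReal.ofReal b.toReal) ^ p := by
        rw [ENNReal.ofReal_toReal hbtop, mul_comm]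
      _ ≤ _ := le_iSup₂_of_le b.toReal (ENNReal.toReal_pos hb0 hbtop) le_rfl
  · refine iSup₂_le fun s _ => ENNReal.mul_le_of_forall_lt fun a ha c hc => ?_
    rcases eq_or_ne c 0 with rfl | hc0
    · simp
    -- `c = m ^ p` for some finite `m` below the distribution function
    set m := c ^ p⁻¹
    have hm : m < distFun μ g (ENNReal.ofReal s) := by
      rwa [← ENNReal.rpow_lt_rpow_iff hp, ENNReal.rpow_inv_rpow hp.ne']
    have hmtop : m ≠ ∞ := hm.ne_top
    have hm0 : m ≠ 0 := by simp [m, hc0, hp.le]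
    calc a * c ≤ ENNReal.ofReal s * c := by gcongr
      _ = ENNReal.ofReal m.toReal ^ p * ENNReal.ofReal s := by
        rw [ENNReal.ofReal_toReal hmtop, ENNReal.rpow_inv_rpow hp.ne', mul_comm]
      _ ≤ ENNReal.ofReal m.toReal ^ p * decRearr μ g (ENNReal.ofReal m.toReal) := by
        gcongr
        apply le_decRearr_of_lt_distFun
        rwa [ENNReal.ofReal_toReal hmtop]
      _ ≤ _ := le_iSup₂_of_le m.toReal (ENNReal.toReal_pos hm0 hmtop) le_rfl

end Rearrangement

theorem exists_pos_apply_eq_of_tendsto_zero {φ : ℝ → ℝ} (hφcont : ContinuousOn φ (Ici 0))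
    (hφ0 : φ 0 = 1) (hφTop : Tendsto φ atTop (𝓝 0)) {c : ℝ} (hc : c ∈ Ioo 0 1) :
    ∃ u, 0 < u ∧ φ u = c := by
  obtain ⟨N, hNc, hN⟩ :=
    ((hφTop.eventually (gt_mem_nhds hc.1)).and (eventually_ge_atTop 0)).exists
  obtain ⟨u, hu, hφu⟩ :=
    intermediate_value_Ioc' hN (hφcont.mono Icc_subset_Ici_self) ⟨hNc.le, hφ0 ▸ hc.2⟩
  exact ⟨u, hu.1, hφu⟩

section Multiplier

variable {X : Type*} [MeasurableSpace X] (μ : Measure X) {L : X → ℝ} {φ : ℝ → ℝ}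

theorem distFun_comp_ofReal_eq_measure_lt (hL0 : ∀ x, 0 ≤ L x) (hφanti : StrictAntiOn φ (Ici 0))
    (hφnonneg : ∀ u, 0 ≤ u → 0 ≤ φ u) {u : ℝ} (hu : 0 ≤ u) :
    distFun μ (fun x => φ (L x)) (ENNReal.ofReal (φ u)) = μ {x | L x < u} := by
  unfold distFun
  congr 1
  ext x
  simp only [mem_ofPred_eq, abs_of_nonneg (hφnonneg _ (hL0 x)),
    ENNReal.ofReal_lt_ofReal_iff_of_nonneg (hφnonneg u hu)]
  exact hφanti.lt_iff_gt hu (hL0 x)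

theorem iSup_ofReal_mul_distFun_comp_eq (hL0 : ∀ x, 0 ≤ L x) (hφcont : ContinuousOn φ (Ici 0))
    (hφanti : StrictAntiOn φ (Ici 0)) (hφ01 : ∀ u : ℝ, 0 ≤ u → φ u ∈ Icc (0:ℝ) 1)
    (hφ0 : φ 0 = 1) (hφTop : Tendsto φ atTop (𝓝 0)) {p : ℝ} (hp : 0 < p) :
    (⨆ s ∈ Ioi (0:ℝ), ENNReal.ofReal s * distFun μ (fun x => φ (L x)) (ENNReal.ofReal s) ^ p) =
      ⨆ u ∈ Ioi (0:ℝ), ENNReal.ofReal (φ u) * μ {x | L x < u} ^ p := by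
  have hφnonneg u (hu : 0 ≤ u) : 0 ≤ φ u := (hφ01 u hu).1
  apply le_antisymm
  · refine iSup₂_le fun s hs => ?_
    rcases lt_or_ge s 1 with hs1 | hs1
    · obtain ⟨u, hu, rfl⟩ := exists_pos_apply_eq_of_tendsto_zero hφcont hφ0 hφTop ⟨hs, hs1⟩
      rw [distFun_comp_ofReal_eq_measure_lt μ hL0 hφanti hφnonneg hu.le]
      exact le_iSup₂_of_le u hu le_rfl
    · have hφle x : |φ (L x)| ≤ 1 :=
        (abs_of_nonneg (hφnonneg _ (hL0 x))).trans_le (hφ01 _ (hL0 x)).2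
      rw [distFun_eq_zero_of_abs_le μ _ hφle (ENNReal.ofReal_le_ofReal hs1),
        ENNReal.zero_rpow_of_pos hp, mul_zero]
      exact zero_le
  · refine iSup₂_le fun u hu => ?_
    rcases (hφnonneg u (le_of_lt hu)).eq_or_lt with h | h
    · rw [← h, ENNReal.ofReal_zero, zero_mul]
      exact zero_le
    · rw [← distFun_comp_ofReal_eq_measure_lt μ hL0 hφanti hφnonneg (le_of_lt hu)]
      exact le_iSup₂_of_le (φ u) h le_rfl

end Multiplier

theorem stmt_19_general {X : Type*} [MeasurableSpace X] (μ : Measure X)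
    (L : X → ℝ) (hL0 : ∀ x, 0 ≤ L x)
    (φ : ℝ → ℝ) (hφcont : ContinuousOn φ (Ici 0))
    (hφanti : StrictAntiOn φ (Ici 0))
    (hφ01 : ∀ u : ℝ, 0 ≤ u → φ u ∈ Icc (0:ℝ) 1)
    (hφ0 : φ 0 = 1) (hphiTop : Tendsto φ atTop (𝓝 0))
    (r : ℝ) (hr : 1 ≤ r) :
    (⨆ t ∈ Ioi (0:ℝ),
        ENNReal.ofReal t ^ (1/r) * decRearr μ (fun x => φ (L x)) (ENNReal.ofReal t)) =
      ⨆ u ∈ Ioi (0:ℝ), ENNReal.ofReal (φ u) * μ {x | L x < u} ^ (1/r) := by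
  have hp : 0 < 1 / r := one_div_pos.2 (zero_lt_one.trans_le hr)
  rw [iSup_rpow_mul_decRearr_eq hp]
  exact iSup_ofReal_mul_distFun_comp_eq μ hL0 hφcont hφanti hφ01 hφ0 hphiTop hp

/-- Spectral multiplier norm computation for measurable functions: for `L : X → [0,∞)`
measurable and `φ : [0,∞) → [0,1]` continuous, strictly decreasing, with `φ(0) = 1` and
`φ(u) → 0` as `u → ∞`, setting `g = φ ∘ L`, for every `r ∈ [1,∞)`:
`sup_{t>0} t^{1/r} g*(t) = sup_{u>0} φ(u) (μ{L < u})^{1/r}`, in `[0,∞]`. -/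
theorem stmt_19 {X : Type*} [MeasurableSpace X] (μ : Measure X) [SigmaFinite μ]
    (L : X → ℝ) (hL : Measurable L) (hL0 : ∀ x, 0 ≤ L x)
    (φ : ℝ → ℝ) (hφcont : ContinuousOn φ (Ici 0))
    (hφanti : StrictAntiOn φ (Ici 0))
    (hφ01 : ∀ u : ℝ, 0 ≤ u → φ u ∈ Icc (0:ℝ) 1)
    (hφ0 : φ 0 = 1) (hphiTop : Tendsto φ atTop (𝓝 0))
    (r : ℝ) (hr : 1 ≤ r) :
    (⨆ t ∈ Ioi (0:ℝ),
        ENNReal.ofReal t ^ (1/r) * decRearr μ (fun x => φ (L x)) (ENNReal.ofReal t)) =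
      ⨆ u ∈ Ioi (0:ℝ), ENNReal.ofReal (φ u) * μ {x | L x < u} ^ (1/r) :=
  stmt_19_general μ L hL0 φ hφcont hφanti hφ01 hφ0 hphiTop r hr
end
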